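/- The map ξ₀ : Q_Q(ℝⁿ) → ℝ^{nQ}, given by concatenating for each coordinate α ∈ {1,...,n} the sorted vector of α-th coordinates of the tuple, satisfies |ξ₀(p) − ξ₀(q)|² = ∑_{α=1}^n G((Π_α)_#(p), (Π_α)_#(q))² ≤ G(p,q)² for all p, q ∈ Q_Q(ℝⁿ); in particular ξ₀ is 1-Lipschitz. -/

import Mathlib

open Finset

/-- The Almgren metric on unordered `Q`-tuples in `ℝⁿ`. -/
noncomputable def Gdist {n Q : ℕ} (p q : Fin Q → EuclideanSpace ℝ (Fin n)) : ℝ :=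
  Finset.univ.inf' Finset.univ_nonempty
    (fun σ : Equiv.Perm (Fin Q) => Real.sqrt (∑ i, ‖p i - q (σ i)‖ ^ 2))

/-- The metric on unordered `Q`-tuples of reals. -/
noncomputable def G1 {Q : ℕ} (p q : Fin Q → ℝ) : ℝ :=
  Finset.univ.inf' Finset.univ_nonempty
    (fun σ : Equiv.Perm (Fin Q) => Real.sqrt (∑ i, (p i - q (σ i)) ^ 2))

/-- The sorting map. -/
noncomputable def ξsort {Q : ℕ} (p : Fin Q → ℝ) : Fin Q → ℝ := p ∘ Tuple.sort p

/-!
Expanding the square, `∑ (a i - b (σ i))²` differs from `∑ (a i - b i)²` only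
through the cross term `∑ a i * b (σ i)`, which by the rearrangement inequality is largest
when `a` and `b` are both sorted. Hence the matching of `ℝ`-valued tuples realising `G` is the
sorted one, which gives the identity. For the inequality, an optimal matching `σ` for `G(p, q)`
in `ℝⁿ` splits coordinatewise into `n` admissible, not necessarily optimal, matchings of the
projected tuples.
-/

lemma sum_sq_sub_eq {ι : Type*} [Fintype ι] (a b : ι → ℝ) :
    ∑ i, (a i - b i) ^ 2 = ∑ i, a i ^ 2 + ∑ i, b i ^ 2 - 2 * ∑ i, a i * b i := by
  rw [mul_sum, ← sum_add_distrib, ← sum_sub_distrib]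
  exact sum_congr rfl fun i _ => by ring

lemma Monovary.sum_sq_sub_le_sum_sq_sub_comp_perm {ι : Type*} [Fintype ι] {a b : ι → ℝ}
    (h : Monovary a b) (σ : Equiv.Perm ι) :
    ∑ i, (a i - b i) ^ 2 ≤ ∑ i, (a i - b (σ i)) ^ 2 := by
  have hcross : ∑ i, a i * b (σ i) ≤ ∑ i, a i * b i := h.sum_mul_comp_perm_le_sum_mul
  rw [sum_sq_sub_eq, sum_sq_sub_eq a fun i => b (σ i), Equiv.sum_comp σ fun i => b i ^ 2]
  linarith

lemma sum_sq_sub_ξsort_le {Q : ℕ} (p q : Fin Q → ℝ) (σ : Equiv.Perm (Fin Q)) :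
    ∑ i, (ξsort p i - ξsort q i) ^ 2 ≤ ∑ i, (p i - q (σ i)) ^ 2 := by
  have hsorted : Monovary (ξsort p) (ξsort q) :=
    (Tuple.monotone_sort p).monovary (Tuple.monotone_sort q)
  rw [← Equiv.sum_comp (Tuple.sort p) fun i => (p i - q (σ i)) ^ 2]
  convert hsorted.sum_sq_sub_le_sum_sq_sub_comp_perm ((Tuple.sort q)⁻¹ * σ * Tuple.sort p)
    using 3 with i
  simp [ξsort]

lemma sum_sq_sub_comp_sort_eq {Q : ℕ} (p q : Fin Q → ℝ) :
    ∑ i, (p i - q ((Tuple.sort q * (Tuple.sort p)⁻¹) i)) ^ 2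
      = ∑ i, (ξsort p i - ξsort q i) ^ 2 := by
  rw [← Equiv.sum_comp (Tuple.sort p)]
  simp [ξsort]

lemma G1_eq_sqrt_sum_sq_sub_ξsort {Q : ℕ} (p q : Fin Q → ℝ) :
    G1 p q = Real.sqrt (∑ i, (ξsort p i - ξsort q i) ^ 2) := by
  refine le_antisymm ?_ (le_inf' _ _ fun σ _ => Real.sqrt_le_sqrt (sum_sq_sub_ξsort_le p q σ))
  rw [← sum_sq_sub_comp_sort_eq]
  exact inf'_le _ (mem_univ _)

lemma sq_G1 {Q : ℕ} (p q : Fin Q → ℝ) :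
    G1 p q ^ 2 = ∑ i, (ξsort p i - ξsort q i) ^ 2 := by
  rw [G1_eq_sqrt_sum_sq_sub_ξsort, Real.sq_sqrt (sum_nonneg fun i _ => sq_nonneg _)]

lemma sq_G1_le {Q : ℕ} (p q : Fin Q → ℝ) (σ : Equiv.Perm (Fin Q)) :
    G1 p q ^ 2 ≤ ∑ i, (p i - q (σ i)) ^ 2 :=
  sq_G1 p q ▸ sum_sq_sub_ξsort_le p q σ

lemma exists_perm_sq_Gdist_eq {n Q : ℕ} (p q : Fin Q → EuclideanSpace ℝ (Fin n)) :
    ∃ σ : Equiv.Perm (Fin Q), Gdist p q ^ 2 = ∑ i, ‖p i - q (σ i)‖ ^ 2 := by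
  obtain ⟨σ, -, hσ⟩ := exists_mem_eq_inf' univ_nonempty
    fun σ : Equiv.Perm (Fin Q) => Real.sqrt (∑ i, ‖p i - q (σ i)‖ ^ 2)
  exact ⟨σ, by rw [Gdist, hσ, Real.sq_sqrt (sum_nonneg fun i _ => sq_nonneg _)]⟩

/-- The map `ξ₀ : Q_Q(ℝⁿ) → ℝ^{nQ}`, concatenating the sorted vectors of `α`-th
coordinates, satisfies `|ξ₀(p) − ξ₀(q)|² = ∑_α G((Π_α)_# p, (Π_α)_# q)² ≤ G(p,q)²`;
in particular `ξ₀` is `1`-Lipschitz. -/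
theorem stmt_3 (n Q : ℕ) (p q : Fin Q → EuclideanSpace ℝ (Fin n)) :
    (∑ α : Fin n, ∑ i : Fin Q,
        (ξsort (fun j => p j α) i - ξsort (fun j => q j α) i) ^ 2
      = ∑ α : Fin n, (G1 (fun j => p j α) (fun j => q j α)) ^ 2) ∧
    ∑ α : Fin n, (G1 (fun j => p j α) (fun j => q j α)) ^ 2 ≤ (Gdist p q) ^ 2 := by
  refine ⟨sum_congr rfl fun α _ => (sq_G1 _ _).symm, ?_⟩
  obtain ⟨σ, hσ⟩ := exists_perm_sq_Gdist_eq p q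
  simp only [hσ, EuclideanSpace.real_norm_sq_eq, PiLp.sub_apply]
  rw [sum_comm]
  exact sum_le_sum fun α _ => sq_G1_le _ _ σ
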